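/- arXiv:1203.1104 — 8 statements merged into one kernel-verified Lean document; each statement's English description precedes it below -/
import Mathlib

section
/- Let m ∈ ℕ₀ and let x ∈ ℓ²(ℕ₀) be a complex sequence with (k^m · x_k)_{k∈ℕ₀} ∈ ℓ². Then for every real p with p > 2/(2m+1), the sequence x belongs to ℓ^p, i.e., ∑_k |x_k|^p < ∞. -/
/-!
For `p ≥ 2` this is the inclusion `ℓ² ⊆ ℓᵖ`. For `p < 2` write `|x_k| = (k^m |x_k|) · k^(-m)`:
the first factor is in `ℓ²` and the second in `ℓʳ` for `1/r = 1/p - 1/2` as soon as `m r > 1`,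
which is exactly `p > 2/(2m+1)`; Hölder's inequality then puts the product in `ℓᵖ`.
-/

theorem summable_norm_rpow_of_le {ι E : Type*} [NormedAddCommGroup E] {f : ι → E} {p q : ℝ}
    (hp : 0 < p) (hpq : p ≤ q) (hf : Summable fun i => ‖f i‖ ^ p) :
    Summable fun i => ‖f i‖ ^ q := by
  have hq : 0 < q := hp.trans_le hpq
  have hmem : Memℓp f (ENNReal.ofReal p) :=
    (memℓp_gen_iff (by rwa [ENNReal.toReal_ofReal hp.le])).2
      (by rwa [ENNReal.toReal_ofReal hp.le])
  simpa only [ENNReal.toReal_ofReal hq.le] using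
    (memℓp_gen_iff (by rwa [ENNReal.toReal_ofReal hq.le])).1
      (hmem.of_exponent_ge (ENNReal.ofReal_le_ofReal hpq))

theorem summable_norm_rpow_of_summable_rpow_mul_norm_sq {E : Type*} [NormedAddCommGroup E]
    {x : ℕ → E} {s p : ℝ} (hs : 0 ≤ s) (hx : Summable fun k : ℕ => ((k : ℝ) ^ s * ‖x k‖) ^ 2)
    (hp : 2 / (2 * s + 1) < p) (hp2 : p < 2) :
    Summable fun k => ‖x k‖ ^ p := by
  have hp0 : 0 < p := lt_of_le_of_lt (by positivity) hp
  have hps : 2 < p * (2 * s + 1) := (div_lt_iff₀ (by positivity)).1 hp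
  set r := 2 * p / (2 - p)
  have hr : 0 < r := div_pos (by positivity) (by linarith)
  have hsr : 1 < s * r := by
    rw [mul_div_assoc', lt_div_iff₀ (by linarith)]
    linarith
  have holder : Real.HolderTriple 2 r p := by
    refine ⟨?_, two_pos, hr⟩
    simp only [r]
    field_simp
    ring
  -- the factorisation `‖x k‖ = (k ^ s * ‖x k‖) * k ^ (-s)` fails at `k = 0`, where `0 ^ (-s) = 0`
  rw [← summable_nat_add_iff 1]
  have hf : Summable fun n : ℕ => (((n + 1 : ℕ) : ℝ) ^ s * ‖x (n + 1)‖) ^ (2 : ℝ) := by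
    simpa only [Real.rpow_two] using (summable_nat_add_iff 1).2 hx
  have hg : Summable fun n : ℕ => ((((n + 1 : ℕ) : ℝ) ^ (-s)) ^ r) := by
    have := (summable_nat_add_iff 1).2 (Real.summable_nat_rpow.2 (by linarith : -(s * r) < -1))
    refine this.congr fun n => ?_
    rw [← Real.rpow_mul (by positivity), neg_mul]
  refine (Real.summable_Lr_of_Lp_Lq_of_nonneg holder (fun n => by positivity)
    (fun n => by positivity) hf hg).congr fun n => ?_
  rw [mul_right_comm, ← Real.rpow_add (by positivity), add_neg_cancel, Real.rpow_zero, one_mul]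

theorem stmt_1 (m : ℕ) (x : ℕ → ℂ)
    (hx : Summable (fun k : ℕ => ‖x k‖ ^ 2))
    (hHx : Summable (fun k : ℕ => ‖((k : ℂ) ^ m) * x k‖ ^ 2))
    (p : ℝ) (hp : p > 2 / (2 * (m : ℝ) + 1)) :
    Summable (fun k : ℕ => ‖x k‖ ^ p) := by
  rcases lt_or_ge p 2 with hp_lt | hp_ge
  · refine summable_norm_rpow_of_summable_rpow_mul_norm_sq (Nat.cast_nonneg m) ?_ hp hp_lt
    simpa [Real.rpow_natCast] using hHx
  · exact summable_norm_rpow_of_le two_pos hp_ge (by simpa [Real.rpow_two] using hx)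
end

section
/- The subspace D₀ = {x ∈ ℓ²(ℕ₀) : (k·x_k) ∈ ℓ² and ∑_k x_k = 0} is dense in ℓ²(ℕ₀). -/
/-!
A finitely supported `g` with coordinate sum `S` is the limit of `g - S • (1/n, …, 1/n, 0, …)`
(`n` equal entries): these vectors are finitely supported with coordinate sum `0`, and the
correction has norm `‖S‖ / √n`. Since finitely supported vectors are dense in `ℓ²`, so is the
zero-sum domain.
-/

open Filter Topology Finset

namespace lp

variable {α E : Type*} [NormedAddCommGroup E] [DecidableEq α] {p : ENNReal}

lemma sum_single_apply (s : Finset α) (c : α → E) (k : α) :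
    (∑ i ∈ s, lp.single p i (c i) : lp (fun _ => E) p) k = if k ∈ s then c k else 0 := by
  simp only [coeFn_sum, Finset.sum_apply, lp.single_apply, Finset.sum_pi_single]

lemma hasSum_sum_single (s : Finset α) (c : α → E) :
    HasSum (∑ i ∈ s, lp.single p i (c i) : lp (fun _ => E) p) (∑ i ∈ s, c i) := by
  have h : HasSum (∑ i ∈ s, lp.single p i (c i) : lp (fun _ => E) p)
      (∑ k ∈ s, (∑ i ∈ s, lp.single p i (c i) : lp (fun _ => E) p) k) :=
    hasSum_sum_of_ne_finset_zero fun k hk => (sum_single_apply s c k).trans (if_neg hk)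
  rwa [Finset.sum_congr rfl fun k hk => (sum_single_apply s c k).trans (if_pos hk)] at h

end lp

section ZeroSum

variable {𝕜 : Type*} [RCLike 𝕜]

def zeroSumDomain : Set (lp (fun _ : ℕ => 𝕜) 2) :=
  {x | Summable (fun k : ℕ => ‖(k : 𝕜) * x k‖ ^ 2) ∧ ∑' k, x k = 0}

lemma mem_zeroSumDomain_of_hasSum_zero {x : lp (fun _ : ℕ => 𝕜) 2} (u : Finset ℕ)
    (hx : ∀ k ∉ u, x k = 0) (hsum : HasSum x 0) : x ∈ zeroSumDomain :=
  ⟨summable_of_ne_finset_zero (s := u) fun k hk => by simp [hx k hk], hsum.tsum_eq⟩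

noncomputable def uniformBlock (n : ℕ) : lp (fun _ : ℕ => 𝕜) 2 :=
  ∑ i ∈ range n, lp.single 2 i ((n : 𝕜)⁻¹)

lemma uniformBlock_apply_of_notMem {n k : ℕ} (hk : k ∉ range n) :
    (uniformBlock n : lp (fun _ : ℕ => 𝕜) 2) k = 0 := by
  rw [uniformBlock, lp.sum_single_apply, if_neg hk]

lemma hasSum_uniformBlock {n : ℕ} (hn : n ≠ 0) :
    HasSum (uniformBlock n : lp (fun _ : ℕ => 𝕜) 2) 1 := by
  have h := lp.hasSum_sum_single (p := 2) (range n) (fun _ => (n : 𝕜)⁻¹)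
  rwa [sum_const, card_range, nsmul_eq_mul, mul_inv_cancel₀ (Nat.cast_ne_zero.mpr hn)] at h

lemma norm_uniformBlock_sq (n : ℕ) :
    ‖(uniformBlock n : lp (fun _ : ℕ => 𝕜) 2)‖ ^ 2 = (n : ℝ)⁻¹ := by
  have h := lp.norm_sum_single (E := fun _ : ℕ => 𝕜) (p := 2) (by norm_num)
    (fun _ => (n : 𝕜)⁻¹) (range n)
  simp only [ENNReal.toReal_ofNat, Real.rpow_two] at h
  rw [uniformBlock, h, sum_const, card_range, nsmul_eq_mul, norm_inv, RCLike.norm_natCast]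
  rcases eq_or_ne n 0 with rfl | hn
  · simp
  · field_simp

lemma tendsto_uniformBlock_zero :
    Tendsto (uniformBlock : ℕ → lp (fun _ : ℕ => 𝕜) 2) atTop (𝓝 0) := by
  rw [tendsto_zero_iff_norm_tendsto_zero]
  have h : ∀ n : ℕ, ‖(uniformBlock n : lp (fun _ : ℕ => 𝕜) 2)‖ = √((n : ℝ)⁻¹) := fun n => by
    rw [← norm_uniformBlock_sq (𝕜 := 𝕜), Real.sqrt_sq (norm_nonneg _)]
  simpa [h] using (tendsto_inv_atTop_nhds_zero_nat (𝕜 := ℝ)).sqrt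

lemma sum_single_mem_closure_zeroSumDomain (s : Finset ℕ) (c : ℕ → 𝕜) :
    (∑ i ∈ s, lp.single 2 i (c i) : lp (fun _ : ℕ => 𝕜) 2) ∈ closure zeroSumDomain := by
  set g : lp (fun _ : ℕ => 𝕜) 2 := ∑ i ∈ s, lp.single 2 i (c i)
  set S := ∑ i ∈ s, c i
  have hmem : ∀ n ≠ 0, g - S • uniformBlock n ∈ zeroSumDomain := fun n hn => by
    refine mem_zeroSumDomain_of_hasSum_zero (s ∪ range n) (fun k hk => ?_) ?_
    · rw [mem_union, not_or] at hk
      rw [lp.coeFn_sub, lp.coeFn_smul, Pi.sub_apply, Pi.smul_apply, lp.sum_single_apply,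
        if_neg hk.1, uniformBlock_apply_of_notMem hk.2, smul_zero, sub_zero]
    · have h := (lp.hasSum_sum_single (p := 2) s c).sub ((hasSum_uniformBlock hn).const_smul S)
      rw [smul_eq_mul, mul_one, sub_self] at h
      exact h
  have hlim : Tendsto (fun n => g - S • uniformBlock n) atTop (𝓝 g) := by
    simpa using (tendsto_const_nhds (x := g)).sub (tendsto_uniformBlock_zero.const_smul S)
  exact mem_closure_of_tendsto hlim ((eventually_ne_atTop 0).mono hmem)

theorem dense_zeroSumDomain : Dense (zeroSumDomain : Set (lp (fun _ : ℕ => 𝕜) 2)) := fun f =>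
  isClosed_closure.mem_of_tendsto (lp.hasSum_single (by norm_num) f)
    (Eventually.of_forall fun s => sum_single_mem_closure_zeroSumDomain s f)

end ZeroSum

theorem stmt_2 :
    Dense {x : lp (fun _ : ℕ => ℂ) 2 |
      Summable (fun k : ℕ => ‖(k : ℂ) * x k‖ ^ 2) ∧ ∑' k, x k = 0} :=
  dense_zeroSumDomain
end

section
/- Define G : ℝ \ ℕ₀ → ℝ by G(λ) = ∑_{k=0}^{∞} (1 + λk)/((k − λ)(1 + k²)). Then G(−1) > 0 and G(−2) < 0; consequently there exists λ ∈ (−2, −1) with G(λ) = 0. -/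
/-!
For `λ ≤ -1` the `k`-th summand of `G λ` is bounded by `-λ / (1 + k²)`, so the series converges
locally uniformly there and `G` is continuous on `(-∞, -1]`. At `λ = -2` every summand with
`k ≥ 1` is negative and the first six already sum to a negative number. At `λ = -1` the first
three summands sum to `14/15`, and from `k = 3` on the summand `(1 - k) / ((k + 1)(1 + k²))` is at
least `-1 / ((k - 1) k)`, which telescopes to `-1/2`. The intermediate value theorem on
`[-2, -1]` gives the zero.
-/

noncomputable def G (l : ℝ) : ℝ :=
  ∑' k : ℕ, (1 + l * k) / ((k - l) * (1 + (k : ℝ) ^ 2))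

open Finset Filter Topology

lemma hasSum_sub_succ_of_antitone {f : ℕ → ℝ} {a : ℝ} (hf : Antitone f)
    (ha : Tendsto f atTop (𝓝 a)) : HasSum (fun n ↦ f n - f (n + 1)) (f 0 - a) := by
  rw [hasSum_iff_tendsto_nat_of_nonneg fun n ↦ sub_nonneg.2 (hf n.le_succ)]
  simp_rw [sum_range_sub']
  exact tendsto_const_nhds.sub ha

lemma hasSum_inv_add_mul_add_add_one {c : ℝ} (hc : 0 < c) :
    HasSum (fun k : ℕ ↦ (((k : ℝ) + c) * ((k : ℝ) + c + 1))⁻¹) c⁻¹ := by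
  have hanti : Antitone fun k : ℕ ↦ ((k : ℝ) + c)⁻¹ := fun m n hmn ↦
    inv_anti₀ (by positivity) (by gcongr)
  have hlim : Tendsto (fun k : ℕ ↦ ((k : ℝ) + c)⁻¹) atTop (𝓝 0) :=
    (tendsto_atTop_add_const_right atTop c tendsto_natCast_atTop_atTop).inv_tendsto_atTop
  convert hasSum_sub_succ_of_antitone hanti hlim using 1
  · ext k
    have : (0 : ℝ) < k + c := by positivity
    push_cast
    field_simp
    ring
  · simp

lemma summable_inv_one_add_sq : Summable fun k : ℕ ↦ (1 + (k : ℝ) ^ 2)⁻¹ := by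
  have hshift : Summable fun k : ℕ ↦ (((k : ℝ) + 1) ^ 2)⁻¹ := by
    have := (summable_nat_add_iff 1).mpr (Real.summable_nat_pow_inv.mpr one_lt_two)
    exact_mod_cast this
  refine Summable.of_nonneg_of_le (fun k ↦ by positivity) (fun k ↦ ?_) (hshift.mul_left 2)
  rw [inv_eq_one_div, ← div_eq_mul_inv, div_le_div_iff₀ (by positivity) (by positivity)]
  nlinarith [sq_nonneg ((k : ℝ) - 1)]

noncomputable def gSummand (l : ℝ) (k : ℕ) : ℝ := (1 + l * k) / ((k - l) * (1 + (k : ℝ) ^ 2))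

lemma G_eq_tsum_gSummand (l : ℝ) : G l = ∑' k, gSummand l k := rfl

lemma gSummand_denom_pos {l : ℝ} (hl : l < 0) (k : ℕ) :
    0 < ((k : ℝ) - l) * (1 + (k : ℝ) ^ 2) := by
  have : 0 < (k : ℝ) - l := by linarith [k.cast_nonneg (α := ℝ)]
  positivity

lemma abs_gSummand_le {l : ℝ} (hl : l ≤ -1) (k : ℕ) :
    |gSummand l k| ≤ -l * (1 + (k : ℝ) ^ 2)⁻¹ := by
  have hk : (0 : ℝ) ≤ k := k.cast_nonneg
  have hd := gSummand_denom_pos (l := l) (by linarith) k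
  have hnum : |1 + l * k| ≤ -l * (k - l) := abs_le.2 ⟨by nlinarith, by nlinarith⟩
  rw [gSummand, abs_div, abs_of_pos hd, div_le_iff₀ hd,
    show -l * (1 + (k : ℝ) ^ 2)⁻¹ * ((k - l) * (1 + (k : ℝ) ^ 2)) = -l * (k - l) by field_simp]
  exact hnum

lemma summable_gSummand {l : ℝ} (hl : l ≤ -1) : Summable (gSummand l) :=
  .of_norm_bounded (summable_inv_one_add_sq.mul_left (-l)) (abs_gSummand_le hl)

lemma G_eq_sum_range_add_tsum {l : ℝ} (hl : l ≤ -1) (N : ℕ) :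
    G l = ∑ k ∈ range N, gSummand l k + ∑' k, gSummand l (k + N) :=
  ((summable_gSummand hl).sum_add_tsum_nat_add N).symm

lemma gSummand_nonpos {l : ℝ} (hl : l ≤ -1) {k : ℕ} (hk : 1 ≤ k) : gSummand l k ≤ 0 := by
  have hk' : (1 : ℝ) ≤ k := by exact_mod_cast hk
  exact div_nonpos_of_nonpos_of_nonneg (by nlinarith) (gSummand_denom_pos (by linarith) k).le

lemma neg_inv_le_gSummand_neg_one (n : ℕ) :
    -(((n : ℝ) + 2) * ((n : ℝ) + 2 + 1))⁻¹ ≤ gSummand (-1) (n + 3) := by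
  have hd := gSummand_denom_pos (l := -1) (by norm_num) (n + 3)
  rw [gSummand, neg_le, ← neg_div, ← one_div, div_le_div_iff₀ hd (by positivity)]
  push_cast
  nlinarith [(n.cast_nonneg : (0 : ℝ) ≤ n)]

lemma G_neg_one_pos : G (-1) > 0 := by
  have hhead : ∑ k ∈ range 3, gSummand (-1) k = 14 / 15 := by
    simp only [gSummand, sum_range_succ, sum_range_zero]
    norm_num
  have htail : -(2⁻¹ : ℝ) ≤ ∑' k, gSummand (-1) (k + 3) := by
    have hbound := (hasSum_inv_add_mul_add_add_one (c := 2) two_pos).neg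
    exact hbound.tsum_eq ▸ hbound.summable.tsum_le_tsum neg_inv_le_gSummand_neg_one
      ((summable_nat_add_iff 3).2 (summable_gSummand le_rfl))
  rw [G_eq_sum_range_add_tsum le_rfl 3, hhead]
  linarith

lemma G_neg_two_neg : G (-2) < 0 := by
  have hhead : ∑ k ∈ range 6, gSummand (-2) k < 0 := by
    simp only [gSummand, sum_range_succ, sum_range_zero]
    norm_num
  have htail : ∑' k, gSummand (-2) (k + 6) ≤ 0 :=
    tsum_nonpos fun k ↦ gSummand_nonpos (by norm_num) (by omega)
  rw [G_eq_sum_range_add_tsum (by norm_num) 6]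
  linarith

lemma continuousOn_G {a b : ℝ} (hb : b ≤ -1) : ContinuousOn G (Set.Icc a b) := by
  refine continuousOn_tsum (fun k ↦ ?_) (summable_inv_one_add_sq.mul_left (-a))
    fun k l hl ↦ (abs_gSummand_le (hl.2.trans hb) k).trans ?_
  · exact ContinuousOn.div (by fun_prop) (by fun_prop)
      fun l hl ↦ (gSummand_denom_pos (by linarith [hl.2]) k).ne'
  · gcongr; exact hl.1

theorem stmt_4 :
    G (-1) > 0 ∧ G (-2) < 0 ∧ ∃ l ∈ Set.Ioo (-2 : ℝ) (-1), G l = 0 := by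
  refine ⟨G_neg_one_pos, G_neg_two_neg, ?_⟩
  obtain ⟨l, hl, hGl⟩ := intermediate_value_Ioo (by norm_num) (continuousOn_G (a := -2) le_rfl)
    ⟨G_neg_two_neg, G_neg_one_pos⟩
  exact ⟨l, hl, hGl⟩
end

section
/- Define G(λ) = ∑_{k=0}^{∞} (1 + λk)/((k − λ)(1 + k²)) for λ < 0. Then G(λ) → −∞ as λ → −∞. -/
/-!
For `l ≤ -1` every term with `k ≥ 1` is nonpositive, while for `k ≤ -l` the `k`-th term is at
most `(1 - k / 4) / (1 + k ^ 2)`. So `G l` is bounded by the partial sums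
`∑ k < N, (1 - k / 4) / (1 + k ^ 2)` for `1 ≤ N ≤ -l`, and these tend to `-∞` because
`∑ 1 / (1 + k ^ 2)` converges whereas `∑ k / (1 + k ^ 2)` diverges like the harmonic series.
-/

open Filter Finset

theorem tsum_le_sum_of_nonpos {ι α : Type*} [AddCommGroup α] [PartialOrder α]
    [IsOrderedAddMonoid α] [TopologicalSpace α] [IsTopologicalAddGroup α] [OrderClosedTopology α]
    {f : ι → α} (hf : Summable f) (s : Finset ι) (hs : ∀ i ∉ s, f i ≤ 0) :
    ∑' i, f i ≤ ∑ i ∈ s, f i := by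
  simpa [tsum_neg] using hf.neg.sum_le_tsum s fun i hi ↦ neg_nonneg.mpr (hs i hi)

theorem summable_one_div_one_add_sq : Summable fun k : ℕ ↦ 1 / (1 + (k : ℝ) ^ 2) := by
  refine (Real.summable_one_div_nat_pow.mpr one_lt_two).of_norm_bounded_eventually_nat ?_
  filter_upwards [eventually_ge_atTop 1] with k hk
  have hk : (1 : ℝ) ≤ k := by exact_mod_cast hk
  rw [Real.norm_of_nonneg (by positivity)]
  gcongr
  linarith

theorem not_summable_div_one_add_sq : ¬ Summable fun k : ℕ ↦ (k : ℝ) / (1 + (k : ℝ) ^ 2) := by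
  intro h
  refine Real.not_summable_natCast_inv
    ((summable_mul_left_iff (a := (2 : ℝ)⁻¹) (by norm_num)).mp ?_)
  refine h.of_nonneg_of_le (fun k ↦ by positivity) fun k ↦ ?_
  rcases Nat.eq_zero_or_pos k with rfl | hk
  · simp
  have hk : (1 : ℝ) ≤ k := by exact_mod_cast hk
  rw [← mul_inv, inv_eq_one_div, div_le_div_iff₀ (by positivity) (by positivity)]
  nlinarith

theorem tendsto_sum_range_one_sub_div_atBot :
    Tendsto (fun N ↦ ∑ k ∈ range N, (1 - (k : ℝ) / 4) / (1 + (k : ℝ) ^ 2)) atTop atBot := by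
  have hdiv := (not_summable_iff_tendsto_nat_atTop_of_nonneg fun k ↦ by positivity).mp
    not_summable_div_one_add_sq
  refine tendsto_atBot_mono (fun N ↦ ?_) <|
    tendsto_atBot_add_const_left _ (∑' k : ℕ, 1 / (1 + (k : ℝ) ^ 2))
      (hdiv.atTop_mul_const_of_neg (r := -1/4) (by norm_num))
  have hsplit : ∑ k ∈ range N, (1 - (k : ℝ) / 4) / (1 + (k : ℝ) ^ 2) =
      ∑ k ∈ range N, 1 / (1 + (k : ℝ) ^ 2) +
        (∑ k ∈ range N, (k : ℝ) / (1 + (k : ℝ) ^ 2)) * (-1/4) := by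
    rw [sum_mul, ← sum_add_distrib]
    exact sum_congr rfl fun k _ ↦ by ring
  rw [hsplit]
  gcongr
  exact summable_one_div_one_add_sq.sum_le_tsum _ fun k _ ↦ by positivity

noncomputable def gTerm (l : ℝ) (k : ℕ) : ℝ := (1 + l * k) / ((k - l) * (1 + (k : ℝ) ^ 2))

theorem abs_gTerm_le {l : ℝ} (hl : l < 0) (k : ℕ) :
    |gTerm l k| ≤ (-l + (-l)⁻¹) * (1 / (1 + (k : ℝ) ^ 2)) := by
  have hk : (0 : ℝ) ≤ k := k.cast_nonneg
  have hkl : 0 < (k : ℝ) - l := by linarith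
  rw [gTerm, ← div_div, abs_div, abs_of_pos (by positivity : (0 : ℝ) < 1 + (k : ℝ) ^ 2),
    mul_one_div]
  gcongr
  rw [abs_div, abs_of_pos hkl, div_le_iff₀ hkl]
  have hinv : (-l)⁻¹ * (-l) = 1 := inv_mul_cancel₀ (by linarith)
  have hnum : |1 + l * k| ≤ 1 + -l * k := abs_le.mpr ⟨by nlinarith, by nlinarith⟩
  nlinarith [mul_nonneg (inv_nonneg.mpr (neg_nonneg.mpr hl.le)) hk]

theorem summable_gTerm {l : ℝ} (hl : l < 0) : Summable (gTerm l) :=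
  .of_norm_bounded (summable_one_div_one_add_sq.mul_left _) (abs_gTerm_le hl)

theorem gTerm_nonpos {l : ℝ} (hl : l ≤ -1) {k : ℕ} (hk : 1 ≤ k) : gTerm l k ≤ 0 := by
  have hk : (1 : ℝ) ≤ k := by exact_mod_cast hk
  exact div_nonpos_of_nonpos_of_nonneg (by nlinarith) (mul_nonneg (by linarith) (by positivity))

theorem gTerm_le {l : ℝ} (hl : l ≤ -1) {k : ℕ} (hkl : (k : ℝ) ≤ -l) :
    gTerm l k ≤ (1 - (k : ℝ) / 4) / (1 + (k : ℝ) ^ 2) := by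
  have hk : (0 : ℝ) ≤ k := k.cast_nonneg
  have hpos : 0 < (k : ℝ) - l := by linarith
  rw [gTerm, ← div_div]
  gcongr
  rw [div_le_iff₀ hpos]
  nlinarith

theorem G_le_sum_range {l : ℝ} {N : ℕ} (hN : 1 ≤ N) (hNl : (N : ℝ) ≤ -l) :
    G l ≤ ∑ k ∈ range N, (1 - (k : ℝ) / 4) / (1 + (k : ℝ) ^ 2) := by
  have hl : l ≤ -1 := by linarith [show (1 : ℝ) ≤ N by exact_mod_cast hN]
  calc
    G l ≤ ∑ k ∈ range N, gTerm l k :=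
      tsum_le_sum_of_nonpos (summable_gTerm (by linarith)) _ fun k hk ↦
        gTerm_nonpos hl (hN.trans (not_lt.mp (mem_range.not.mp hk)))
    _ ≤ _ := sum_le_sum fun k hk ↦ gTerm_le hl <|
      le_trans (by exact_mod_cast (mem_range.mp hk).le) hNl

theorem stmt_5 : Filter.Tendsto G Filter.atBot Filter.atBot := by
  rw [tendsto_atBot]
  intro M
  obtain ⟨N, hNM, hN⟩ :=
    ((tendsto_sum_range_one_sub_div_atBot.eventually_le_atBot M).and
      (eventually_ge_atTop 1)).exists
  filter_upwards [eventually_le_atBot (-(N : ℝ))] with l hNl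
  exact (G_le_sum_range hN (le_neg.mpr hNl)).trans hNM
end

section
/- Define G(λ) = ∑_{k=0}^{∞} (1 + λk)/((k − λ)(1 + k²)) for real λ not in ℕ₀. If both λ and λ − 1 are not in ℕ₀ and λ ≠ 0, then G(λ) − G(λ − 1) = −1/λ. -/
/-!
Partial fractions give `(1 + l k) / ((k - l)(1 + k²)) = 1 / (k - l) - k / (1 + k²)`, so the
summands of `G l` and `G (l - 1)` differ by `1 / (k - l) - 1 / (k + 1 - l)`. This telescopes to
`1 / (0 - l) = -1 / l`; both series converge because their terms are `O(1 / k²)`.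
-/

open Filter Topology Asymptotics

lemma summable_of_tendsto_sq_mul {f : ℕ → ℝ} {c : ℝ}
    (h : Tendsto (fun k : ℕ => (k : ℝ) ^ 2 * f k) atTop (𝓝 c)) : Summable f := by
  have hsq : Summable (fun k : ℕ => 1 / (k : ℝ) ^ 2) :=
    Real.summable_one_div_nat_pow.mpr one_lt_two
  refine summable_of_isBigO_nat hsq ?_
  have hO := h.isBigO_one ℝ |>.mul (isBigO_refl (fun k : ℕ => 1 / (k : ℝ) ^ 2) atTop)
  refine hO.congr' ?_ (.of_eq (by simp))
  filter_upwards [eventually_ne_atTop 0] with k hk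
  field_simp

lemma hasSum_sub_succ {M : Type*} [AddCommGroup M] [TopologicalSpace M] [IsTopologicalAddGroup M]
    [T2Space M] {a : ℕ → M} (hs : Summable (fun k => a k - a (k + 1)))
    (ha : Tendsto a atTop (𝓝 0)) : HasSum (fun k => a k - a (k + 1)) (a 0) := by
  rw [hs.hasSum_iff_tendsto_nat]
  simp_rw [Finset.sum_range_sub']
  simpa using tendsto_const_nhds.sub ha

lemma tendsto_sq_mul_G_term (l : ℝ) :
    Tendsto (fun k : ℕ => (k : ℝ) ^ 2 * ((1 + l * k) / ((k - l) * (1 + (k : ℝ) ^ 2))))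
      atTop (𝓝 l) := by
  have hlin : Tendsto (fun k : ℕ => 1 / (k : ℝ) + l) atTop (𝓝 l) := by
    simpa using tendsto_one_div_atTop_nhds_zero_nat.add_const l
  have hshift : Tendsto (fun k : ℕ => (k : ℝ) / (k + -l)) atTop (𝓝 1) :=
    tendsto_natCast_div_add_atTop (-l)
  have hsq : Tendsto (fun k : ℕ => ((k ^ 2 : ℕ) : ℝ) / ((k ^ 2 : ℕ) + 1)) atTop (𝓝 1) :=
    (tendsto_natCast_div_add_atTop 1).comp (tendsto_pow_atTop two_ne_zero)
  have hlim := hlin.mul (hshift.mul hsq)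
  rw [mul_one, mul_one] at hlim
  refine hlim.congr' ?_
  filter_upwards [eventually_ne_atTop 0, eventually_gt_atTop ⌈l⌉₊] with k hk hkl
  have hkl' : (k : ℝ) - l ≠ 0 := sub_ne_zero.mpr (Nat.lt_of_ceil_lt hkl).ne'
  push_cast
  rw [← sub_eq_add_neg]
  field_simp
  ring

lemma summable_G_term (l : ℝ) :
    Summable (fun k : ℕ => (1 + l * k) / ((k - l) * (1 + (k : ℝ) ^ 2))) :=
  summable_of_tendsto_sq_mul (tendsto_sq_mul_G_term l)

lemma G_term_eq_sub {l x : ℝ} (hx : x - l ≠ 0) :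
    (1 + l * x) / ((x - l) * (1 + x ^ 2)) = 1 / (x - l) - x / (1 + x ^ 2) := by
  have : 1 + x ^ 2 ≠ 0 := by positivity
  field_simp
  ring

theorem stmt_6_general (l : ℝ) (hl : ∀ n : ℕ, l ≠ n) : G l - G (l - 1) = -1 / l := by
  set a : ℕ → ℝ := fun k => 1 / ((k : ℝ) - l)
  have hdiff : ∀ k : ℕ, (1 + l * k) / ((k - l) * (1 + (k : ℝ) ^ 2))
      - (1 + (l - 1) * k) / ((k - (l - 1)) * (1 + (k : ℝ) ^ 2)) = a k - a (k + 1) := by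
    intro k
    rw [G_term_eq_sub (sub_ne_zero.mpr (hl k).symm),
      G_term_eq_sub (by simpa [sub_eq_zero, sub_sub_eq_add_sub] using (hl (k + 1)).symm)]
    simp only [a, Nat.cast_add, Nat.cast_one]
    ring
  have ha : Tendsto a atTop (𝓝 0) := by
    have hsub : Tendsto (fun k : ℕ => (k : ℝ) - l) atTop atTop :=
      tendsto_atTop_add_const_right atTop (-l) tendsto_natCast_atTop_atTop
    simpa [a, Pi.inv_def] using hsub.inv_tendsto_atTop
  have htel := hasSum_sub_succ (((summable_G_term l).sub (summable_G_term (l - 1))).congr hdiff) ha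
  rw [G, G, ← (summable_G_term l).tsum_sub (summable_G_term (l - 1)), tsum_congr hdiff,
    htel.tsum_eq]
  simp [a, neg_div, one_div]

theorem stmt_6 (l : ℝ) (hl : ∀ n : ℕ, l ≠ n) (hl' : ∀ n : ℕ, l - 1 ≠ n)
    (hl0 : l ≠ 0) : G l - G (l - 1) = -1 / l :=
  stmt_6_general l hl
end

section
/- Let L be the quadratic form Q_L(x) = ∑_{k=0}^{∞} k·|x_k|² defined on D₀ = {x ∈ ℓ²(ℕ₀) : (k·x_k) ∈ ℓ², ∑_k x_k = 0}. Then inf { Q_L(x)/‖x‖² : x ∈ D₀, x ≠ 0 } = 0; i.e., Q_L(x) ≥ 0 for all x ∈ D₀, and for every ε > 0 there exists nonzero x ∈ D₀ with Q_L(x) < ε·‖x‖². -/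
/-!
The form is a sum of nonnegative terms. For the other half, the vector
`x = (-H_n, 1, 1/2, …, 1/n, 0, …)` has coordinate sum `0`, form value
`∑_{k ≤ n} k · k⁻² = H_n` and squared norm at least `H_n²`, so the Rayleigh quotient is at most
`1 / H_n`, which tends to `0` because the harmonic series diverges.
-/

open Finset Filter

lemma tendsto_harmonic_atTop : Tendsto (fun n : ℕ => (harmonic n : ℝ)) atTop atTop := by
  simpa [harmonic, one_div] using Real.tendsto_sum_range_one_div_nat_succ_atTop

noncomputable def harmonicWitness (n : ℕ) (k : ℕ) : ℂ :=
  if k = 0 then -(harmonic n : ℂ) else if k ≤ n then (k : ℂ)⁻¹ else 0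

namespace harmonicWitness

variable {n : ℕ}

lemma apply_zero : harmonicWitness n 0 = -(harmonic n : ℂ) := rfl

lemma apply_of_mem_Icc {k : ℕ} (hk : k ∈ Icc 1 n) : harmonicWitness n k = (k : ℂ)⁻¹ := by
  rw [mem_Icc] at hk
  simp [harmonicWitness, Nat.one_le_iff_ne_zero.mp hk.1, hk.2]

lemma apply_of_notMem_range {k : ℕ} (hk : k ∉ range (n + 1)) : harmonicWitness n k = 0 := by
  rw [mem_range, not_lt] at hk
  simp [harmonicWitness, show k ≠ 0 by omega, show ¬k ≤ n by omega]

lemma ne_zero (hn : n ≠ 0) : harmonicWitness n ≠ 0 := fun h => by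
  have := congrFun h 0
  rw [apply_zero, Pi.zero_apply, neg_eq_zero, Rat.cast_eq_zero] at this
  exact (harmonic_pos hn).ne' this

lemma hasSum_comp {M : Type*} [AddCommMonoid M] [TopologicalSpace M] {f : ℕ → ℂ → M}
    (hf : ∀ k, f k 0 = 0) :
    HasSum (fun k => f k (harmonicWitness n k))
      ((∑ k ∈ range n, f (k + 1) (↑(k + 1))⁻¹) + f 0 (-(harmonic n : ℂ))) := by
  have hsupp : ∀ k ∉ range (n + 1), f k (harmonicWitness n k) = 0 := fun k hk => by
    rw [apply_of_notMem_range hk, hf]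
  have hsum : ∑ k ∈ range (n + 1), f k (harmonicWitness n k) =
      (∑ k ∈ range n, f (k + 1) (↑(k + 1))⁻¹) + f 0 (-(harmonic n : ℂ)) := by
    rw [sum_range_succ', apply_zero]
    refine congrArg (· + _) (sum_congr rfl fun k hk => ?_)
    rw [apply_of_mem_Icc (by simpa using mem_range.mp hk)]
  exact hsum ▸ hasSum_sum_of_ne_finset_zero hsupp

lemma tsum_eq_zero : ∑' k, harmonicWitness n k = 0 := by
  rw [(hasSum_comp (f := fun _ z => z) fun _ => rfl).tsum_eq, harmonic]
  push_cast
  exact add_neg_cancel _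

lemma tsum_natCast_mul_norm_sq :
    ∑' k : ℕ, (k : ℝ) * ‖harmonicWitness n k‖ ^ 2 = harmonic n := by
  rw [(hasSum_comp (f := fun k z => (k : ℝ) * ‖z‖ ^ 2) fun _ => by simp).tsum_eq, harmonic]
  simp only [Nat.cast_zero, zero_mul, add_zero, Rat.cast_sum, Rat.cast_inv, Rat.cast_natCast]
  refine sum_congr rfl fun k _ => ?_
  rw [norm_inv, Complex.norm_natCast]
  field_simp

lemma summable_norm_natCast_mul_sq : Summable fun k : ℕ => ‖(k : ℂ) * harmonicWitness n k‖ ^ 2 :=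
  (hasSum_comp (f := fun k z => ‖(k : ℂ) * z‖ ^ 2) fun _ => by simp).summable

lemma summable_norm_sq : Summable fun k => ‖harmonicWitness n k‖ ^ 2 :=
  (hasSum_comp (f := fun _ z => ‖z‖ ^ 2) fun _ => by simp).summable

lemma sq_harmonic_le_tsum_norm_sq : (harmonic n : ℝ) ^ 2 ≤ ∑' k, ‖harmonicWitness n k‖ ^ 2 := by
  rw [(hasSum_comp (f := fun _ z => ‖z‖ ^ 2) fun _ => by simp).tsum_eq, norm_neg,
    Complex.norm_ratCast, sq_abs]
  exact le_add_of_nonneg_left (sum_nonneg fun _ _ => by positivity)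

end harmonicWitness

theorem stmt_8 :
    (∀ x : ℕ → ℂ,
      Summable (fun k : ℕ => ‖x k‖ ^ 2) → Summable (fun k : ℕ => ‖(k : ℂ) * x k‖ ^ 2) →
      (∑' k, x k) = 0 → 0 ≤ ∑' k : ℕ, (k : ℝ) * ‖x k‖ ^ 2) ∧
    ∀ ε : ℝ, ε > 0 →
      ∃ x : ℕ → ℂ,
        Summable (fun k : ℕ => ‖x k‖ ^ 2) ∧ Summable (fun k : ℕ => ‖(k : ℂ) * x k‖ ^ 2) ∧
        (∑' k, x k) = 0 ∧ x ≠ 0 ∧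
        (∑' k : ℕ, (k : ℝ) * ‖x k‖ ^ 2) < ε * ∑' k : ℕ, ‖x k‖ ^ 2 := by
  refine ⟨fun x _ _ _ => tsum_nonneg fun k => by positivity, fun ε hε => ?_⟩
  obtain ⟨n, hn⟩ := (tendsto_harmonic_atTop.eventually_gt_atTop ε⁻¹).exists
  have hH : 0 < (harmonic n : ℝ) := (inv_pos.2 hε).trans hn
  have hn0 : n ≠ 0 := by rintro rfl; simp at hH
  refine ⟨harmonicWitness n, harmonicWitness.summable_norm_sq,
    harmonicWitness.summable_norm_natCast_mul_sq, harmonicWitness.tsum_eq_zero,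
    harmonicWitness.ne_zero hn0, ?_⟩
  have hεH : 1 < ε * harmonic n := by rwa [inv_lt_iff_one_lt_mul₀ hε, mul_comm] at hn
  calc ∑' k : ℕ, (k : ℝ) * ‖harmonicWitness n k‖ ^ 2 = harmonic n :=
        harmonicWitness.tsum_natCast_mul_norm_sq
    _ < ε * harmonic n ^ 2 := by nlinarith
    _ ≤ ε * ∑' k, ‖harmonicWitness n k‖ ^ 2 := by
        gcongr; exact harmonicWitness.sq_harmonic_le_tsum_norm_sq
end

section
/- For 0 ≤ x ≤ 1, ∑_{n=0}^{∞} cos(2πnx)/(1+n²) = (π/2)·cosh(2π(x − 1/2))/sinh(π) + 1/2. -/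
/-!
Extend `x ↦ cosh (2πb(x - 1/2))` from `[0, 1]` to a 1-periodic function; it is continuous because
`cosh` is even, so the two endpoint values agree. Its Fourier coefficients are
`b sinh (πb) / (π (b² + n²))`, a summable family, so the Fourier series converges to it at every
point. Pairing the terms `n` and `-n` turns this into a cosine series over `ℕ`, whose value at
`b = 1` is the theorem.
-/

open Real
open Complex (I)

lemma integral_exp_neg_two_pi_I_mul_exp (n : ℤ) {c : ℂ} (hc : c ≠ 2 * π * I * n) :
    ∫ x in (0 : ℝ)..1, Complex.exp (-(2 * π * I * n * x)) * Complex.exp (c * x) =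
      (Complex.exp c - 1) / (c - 2 * π * I * n) := by
  have hc' : c - 2 * π * I * n ≠ 0 := sub_ne_zero.mpr hc
  have hexp : Complex.exp (c - 2 * π * I * n) = Complex.exp c := by
    rw [Complex.exp_sub, show 2 * π * I * n = n * (2 * π * I) by ring,
      Complex.exp_int_mul_two_pi_mul_I, div_one]
  simp_rw [← Complex.exp_add, show ∀ x : ℂ, -(2 * π * I * n * x) + c * x =
    (c - 2 * π * I * n) * x from fun x => by ring]
  rw [integral_exp_mul_complex hc']
  simp [hexp]

lemma integral_exp_neg_two_pi_I_mul_cosh {b : ℝ} (hb : b ≠ 0) (n : ℤ) :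
    ∫ x in (0 : ℝ)..1,
        Complex.exp (-(2 * π * I * n * x)) * Real.cosh (2 * π * b * (x - 1 / 2)) =
      (b * Real.sinh (π * b) / (π * (b ^ 2 + n ^ 2)) : ℝ) := by
  set E := Complex.exp (π * b)
  have hE : E ≠ 0 := Complex.exp_ne_zero _
  have hsplit : ∀ x : ℝ,
      Complex.exp (-(2 * π * I * n * x)) * (Real.cosh (2 * π * b * (x - 1 / 2)) : ℂ) =
        (E⁻¹ * (Complex.exp (-(2 * π * I * n * x)) * Complex.exp (2 * π * b * x)) +
          E * (Complex.exp (-(2 * π * I * n * x)) * Complex.exp (-(2 * π * b) * x))) / 2 := by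
    intro x
    rw [Complex.ofReal_cosh, Complex.cosh]
    push_cast
    simp only [E, Complex.exp_sub, Complex.exp_neg, mul_sub, neg_mul]
    field_simp
  have hne : ∀ c : ℝ, c ≠ 0 → (c : ℂ) ≠ 2 * π * I * n := fun c hc h => by
    simpa [hc] using congrArg Complex.re h
  have hb' : 2 * π * b ≠ 0 := by positivity
  have h₁ := integral_exp_neg_two_pi_I_mul_exp n (hne (2 * π * b) hb')
  have h₂ := integral_exp_neg_two_pi_I_mul_exp n (hne (-(2 * π * b)) (neg_ne_zero.mpr hb'))
  push_cast at h₁ h₂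
  rw [intervalIntegral.integral_congr (fun x _ => hsplit x), intervalIntegral.integral_div,
    intervalIntegral.integral_add (Continuous.intervalIntegrable (by fun_prop) _ _)
      (Continuous.intervalIntegrable (by fun_prop) _ _),
    intervalIntegral.integral_const_mul, intervalIntegral.integral_const_mul, h₁, h₂]
  have hE2 : Complex.exp (2 * π * b) = E ^ 2 := by
    rw [sq, ← Complex.exp_add]; ring_nf
  have hsinh : ((Real.sinh (π * b) : ℝ) : ℂ) = (E - E⁻¹) / 2 := by
    rw [Complex.ofReal_sinh, Complex.sinh, Complex.exp_neg]; push_cast; rfl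
  have hd₁ : (b : ℂ) - I * n ≠ 0 := fun h => by simpa [hb] using congrArg Complex.re h
  have hd₂ : (b : ℂ) + I * n ≠ 0 := fun h => by simpa [hb] using congrArg Complex.re h
  have hd : (b : ℂ) ^ 2 + n ^ 2 = (b - I * n) * (b + I * n) := by
    linear_combination (n : ℂ) ^ 2 * Complex.I_sq
  rw [Complex.ofReal_div, Complex.ofReal_mul, hsinh, Complex.exp_neg, hE2]
  push_cast
  rw [hd, show 2 * (π : ℂ) * b - 2 * π * I * n = 2 * π * (b - I * n) by ring,
    show -(2 * (π : ℂ) * b) - 2 * π * I * n = -(2 * π * (b + I * n)) by ring]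
  field_simp
  ring

lemma fourierCoeffOn_cosh {b : ℝ} (hb : b ≠ 0) (n : ℤ) :
    fourierCoeffOn zero_lt_one (fun x : ℝ => (Real.cosh (2 * π * b * (x - 1 / 2)) : ℂ)) n =
      (b * Real.sinh (π * b) / (π * (b ^ 2 + n ^ 2)) : ℝ) := by
  rw [fourierCoeffOn_eq_integral, sub_zero, div_one, one_smul,
    ← integral_exp_neg_two_pi_I_mul_cosh hb n]
  refine intervalIntegral.integral_congr fun x _ => ?_
  rw [smul_eq_mul, fourier_coe_apply]
  push_cast
  ring_nf

theorem AddCircle.liftIco_coe_apply_of_mem_Icc {𝕜 B : Type*} [AddCommGroup 𝕜]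
    [LinearOrder 𝕜] [IsOrderedAddMonoid 𝕜] [Archimedean 𝕜] {p a : 𝕜} [hp : Fact (0 < p)]
    {f : 𝕜 → B} (hf : f a = f (a + p)) {x : 𝕜} (hx : x ∈ Set.Icc a (a + p)) :
    AddCircle.liftIco p a f x = f x := by
  rcases hx.1.eq_or_lt with rfl | hax
  · exact AddCircle.liftIco_coe_apply (Set.left_mem_Ico.mpr (lt_add_of_pos_right _ hp.out))
  · rw [← AddCircle.liftIoc_eq_liftIco hf]
    exact AddCircle.liftIoc_coe_apply ⟨hax, hx.2⟩

-- Stated in the shape `f a = f (a + p)` expected by `AddCircle.liftIco_continuous`.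
lemma cosh_two_pi_mul_sub_half_endpoints (b : ℝ) :
    (Real.cosh (2 * π * b * ((0 : ℝ) - 1 / 2)) : ℂ) =
      Real.cosh (2 * π * b * (0 + 1 - 1 / 2)) := by
  rw [← Real.cosh_neg (2 * π * b * (0 - 1 / 2))]
  ring_nf

noncomputable def periodicCosh (b : ℝ) : C(UnitAddCircle, ℂ) :=
  ⟨AddCircle.liftIco 1 0 fun x : ℝ => (Real.cosh (2 * π * b * (x - 1 / 2)) : ℂ),
    AddCircle.liftIco_continuous (cosh_two_pi_mul_sub_half_endpoints b) (by fun_prop)⟩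

lemma periodicCosh_coe_apply (b : ℝ) {x : ℝ} (hx : x ∈ Set.Icc (0 : ℝ) 1) :
    periodicCosh b x = Real.cosh (2 * π * b * (x - 1 / 2)) := by
  rw [periodicCosh, ContinuousMap.coe_mk]
  exact AddCircle.liftIco_coe_apply_of_mem_Icc (cosh_two_pi_mul_sub_half_endpoints b)
    (by rwa [zero_add])

lemma fourierCoeff_periodicCosh {b : ℝ} (hb : b ≠ 0) (n : ℤ) :
    fourierCoeff (periodicCosh b) n = (b * Real.sinh (π * b) / (π * (b ^ 2 + n ^ 2)) : ℝ) := by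
  rw [periodicCosh, ContinuousMap.coe_mk, fourierCoeff_liftIco_eq]
  simpa using fourierCoeffOn_cosh hb n

lemma summable_one_div_sq_add_int_sq (b : ℝ) : Summable fun n : ℤ => 1 / (b ^ 2 + n ^ 2) := by
  refine (Real.summable_one_div_int_pow.mpr one_lt_two).of_norm_bounded_eventually ?_
  filter_upwards [Filter.eventually_cofinite_ne 0] with n hn
  have hn2 : (0 : ℝ) < n ^ 2 := by positivity
  rw [Real.norm_of_nonneg (by positivity)]
  gcongr
  exact le_add_of_nonneg_left (sq_nonneg b)

lemma hasSum_int_div_sq_add_sq_mul_cos {b : ℝ} (hb : b ≠ 0) {x : ℝ}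
    (hx : x ∈ Set.Icc (0 : ℝ) 1) :
    HasSum
      (fun n : ℤ => b * Real.sinh (π * b) / (π * (b ^ 2 + n ^ 2)) * Real.cos (2 * π * n * x))
      (Real.cosh (2 * π * b * (x - 1 / 2))) := by
  have hsum : Summable (fourierCoeff (periodicCosh b)) := by
    rw [funext (fourierCoeff_periodicCosh hb)]
    refine Complex.summable_ofReal.mpr ?_
    exact ((summable_one_div_sq_add_int_sq b).mul_left (b * Real.sinh (π * b) / π)).congr
      fun n => by rw [mul_one_div, div_div]
  have := Complex.reCLM.hasSum (has_pointwise_sum_fourier_series_of_summable hsum x)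
  simp only [fourierCoeff_periodicCosh hb, periodicCosh_coe_apply b hx] at this
  convert this using 1
  · ext n
    rw [Complex.reCLM_apply, smul_eq_mul, Complex.re_ofReal_mul, fourier_coe_apply,
      show 2 * π * I * n * x / ((1 : ℝ) : ℂ) = ((2 * π * n * x : ℝ) : ℂ) * I by
        push_cast; ring,
      Complex.exp_ofReal_mul_I_re]
  · rw [Complex.reCLM_apply, Complex.ofReal_re]

theorem hasSum_cos_div_sq_add_sq {b : ℝ} (hb : b ≠ 0) {x : ℝ}
    (hx : x ∈ Set.Icc (0 : ℝ) 1) :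
    HasSum (fun n : ℕ => Real.cos (2 * π * n * x) / (b ^ 2 + n ^ 2))
      (π / (2 * b) * (Real.cosh (2 * π * b * (x - 1 / 2)) / Real.sinh (π * b)) +
        1 / (2 * b ^ 2)) := by
  have hs : Real.sinh (π * b) ≠ 0 := Real.sinh_ne_zero.mpr (mul_ne_zero pi_ne_zero hb)
  have h := (hasSum_int_div_sq_add_sq_mul_cos hb hx).nat_add_neg.mul_left
    (π / (2 * b * Real.sinh (π * b)))
  have hval : π / (2 * b) * (Real.cosh (2 * π * b * (x - 1 / 2)) / Real.sinh (π * b)) +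
      1 / (2 * b ^ 2) =
        π / (2 * b * Real.sinh (π * b)) * (Real.cosh (2 * π * b * (x - 1 / 2)) +
          b * Real.sinh (π * b) / (π * (b ^ 2 + ((0 : ℤ) : ℝ) ^ 2)) *
            Real.cos (2 * π * ((0 : ℤ) : ℝ) * x)) := by
    rw [Int.cast_zero, mul_zero, zero_mul, Real.cos_zero]
    field_simp
    ring
  rw [hval]
  refine h.congr_fun fun n => ?_
  have : (b ^ 2 + n ^ 2 : ℝ) ≠ 0 := by positivity
  push_cast
  rw [neg_sq, mul_neg, neg_mul, Real.cos_neg]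
  field_simp
  ring

theorem stmt_11 (x : ℝ) (hx : x ∈ Set.Icc (0 : ℝ) 1) :
    ∑' n : ℕ, Real.cos (2 * π * n * x) / (1 + (n : ℝ) ^ 2) =
      π / 2 * (Real.cosh (2 * π * (x - 1 / 2)) / Real.sinh π) + 1 / 2 := by
  simpa using (hasSum_cos_div_sq_add_sq one_ne_zero hx).tsum_eq
end

section
/- For all real φ, ∑_{n∈ℤ} (sin(π(φ−n)))²/(π(φ−n))² = 1, where the term with φ = n is interpreted as 1. -/
/-!
Parseval's identity for `x ↦ exp (2πiφx)` on `[0, 1]`: this function has modulus one, and its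
`n`-th Fourier coefficient `∫₀¹ exp (2πi(φ - n)x) dx` has modulus `|sinc (π(φ - n))|`.
-/

open Real MeasureTheory

lemma norm_intervalIntegral_exp_two_pi_I_mul (a : ℝ) :
    ‖∫ x in (0 : ℝ)..1, Complex.exp (2 * π * Complex.I * a * x)‖ = |sinc (π * a)| := by
  rcases eq_or_ne a 0 with rfl | ha
  · simp
  have hc : 2 * π * Complex.I * a ≠ 0 := by simp [ha, pi_ne_zero]
  have hexp : 2 * π * Complex.I * a * ((1 : ℝ) : ℂ) = Complex.I * ((2 * (π * a) : ℝ) : ℂ) := by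
    push_cast; ring
  rw [integral_exp_mul_complex hc, hexp, Complex.ofReal_zero, mul_zero, Complex.exp_zero,
    norm_div, Complex.norm_exp_I_mul_ofReal_sub_one, mul_div_cancel_left₀ _ two_ne_zero,
    sinc_of_ne_zero (mul_ne_zero pi_ne_zero ha), abs_div]
  simp only [norm_mul, Complex.norm_real, Complex.norm_I, Complex.norm_ofNat,
    norm_ofNat, norm_eq_abs, abs_mul, abs_of_pos pi_pos, mul_one]
  ring

lemma fourierCoeffOn_exp_two_pi_I_mul (φ : ℝ) (n : ℤ) :
    fourierCoeffOn zero_lt_one (fun x : ℝ => Complex.exp (2 * π * Complex.I * φ * x)) n =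
      ∫ x in (0 : ℝ)..1, Complex.exp (2 * π * Complex.I * (φ - n : ℝ) * x) := by
  rw [fourierCoeffOn_eq_integral, sub_zero, div_one, one_smul]
  congr 1 with x
  rw [fourier_coe_apply, smul_eq_mul, ← Complex.exp_add]
  push_cast
  ring_nf

lemma sinc_pi_mul_sub_sq (a b : ℝ) :
    sinc (π * (a - b)) ^ 2 =
      if a = b then 1 else Real.sin (π * (a - b)) ^ 2 / (π * (a - b)) ^ 2 := by
  simp [sinc_apply, sub_eq_zero, pi_ne_zero, apply_ite (· ^ 2), div_pow]

theorem stmt_18 (φ : ℝ) :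
    ∑' n : ℤ, (if φ = (n : ℝ) then (1 : ℝ)
      else Real.sin (π * (φ - n)) ^ 2 / (π * (φ - n)) ^ 2) = 1 := by
  have hL2 : MemLp (fun x : ℝ => Complex.exp (2 * π * Complex.I * φ * x)) 2
      (volume.restrict (Set.Ioc 0 1)) :=
    MemLp.of_bound (by fun_prop) 1 (ae_of_all _ fun x => by simp [Complex.norm_exp])
  have parseval := tsum_sq_fourierCoeffOn zero_lt_one hL2
  simp_rw [fourierCoeffOn_exp_two_pi_I_mul, norm_intervalIntegral_exp_two_pi_I_mul, sq_abs,
    sinc_pi_mul_sub_sq] at parseval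
  rw [parseval]
  simp [Complex.norm_exp]
end
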